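/- Let G be a loop-free multigraph with n vertices and m̄ undirected edges, let k ≥ 0, and let G_k be the k-th subdivision graph of G, obtained by replacing each undirected edge by an undirected path through k new vertices. Then its characteristic polynomial χ(x) = det(x·I_{n+km̄} − A_{G_k}) satisfies, identically in x, U_k(x/2)^n · χ(x) = U_k(x/2)^{m̄} · det( x·U_k(x/2)·I_n − U_{k−1}(x/2)·D_G − A_G ). -/
import Mathlib


open Matrix

noncomputable section
open scoped Classical

namespace SubdivStmt8

/-- The (symmetric) adjacency matrix of the loop-free multigraph with undirected edge
set `E`, where each edge has been given an orientation via `t, h : E → V`: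
`(A_G)_{uv}` is the number of edges joining `u` and `v`. -/
def adjGraph {V E : Type*} [Fintype E] (t h : E → V) : Matrix V V ℂ :=
  Matrix.of fun u v =>
    ((Finset.univ.filter fun e => (t e = u ∧ h e = v) ∨ (t e = v ∧ h e = u)).card : ℂ)

/-- The degree matrix: diagonal matrix of row sums. -/
def degOf {V : Type*} [Fintype V] [DecidableEq V] (A : Matrix V V ℂ) : Matrix V V ℂ :=
  Matrix.diagonal fun u => ∑ v, A u v

/-- The adjacency matrix of the `k`-th subdivision graph of the loop-free multigraph
with edges oriented by `t, h`: each undirected edge `ē` joining `u` and `v` is replaced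
by the undirected path `u − (ē,1) − ⋯ − (ē,k) − v` (for `k = 0` one gets `G` back). -/
def subdivGraphAdj {V E : Type*} [Fintype E] (t h : E → V) (k : ℕ) :
    Matrix (V ⊕ E × Fin k) (V ⊕ E × Fin k) ℂ :=
  Matrix.of fun i j =>
    match i, j with
    | Sum.inl u, Sum.inl v => if k = 0 then adjGraph t h u v else 0
    | Sum.inl u, Sum.inr (e, j) =>
        (if t e = u ∧ (j : ℕ) = 0 then 1 else 0) + (if h e = u ∧ (j : ℕ) + 1 = k then 1 else 0)
    | Sum.inr (e, j), Sum.inl v =>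
        (if t e = v ∧ (j : ℕ) = 0 then 1 else 0) + (if h e = v ∧ (j : ℕ) + 1 = k then 1 else 0)
    | Sum.inr (e, j), Sum.inr (e', j') =>
        if e = e' ∧ ((j' : ℕ) = (j : ℕ) + 1 ∨ (j : ℕ) = (j' : ℕ) + 1) then 1 else 0

/-- `U_k(y)`, the Chebyshev polynomial of the second kind (with `U_{-1} = 0`). -/
def UC (k : ℤ) (y : ℂ) : ℂ := (Polynomial.Chebyshev.U ℂ k).eval y

end SubdivStmt8

open SubdivStmt8

open Polynomial Polynomial.Chebyshev

lemma UC_rec (x : ℂ) (n : ℤ) : UC (n+2) (x/2) = x * UC (n+1) (x/2) - UC n (x/2) := by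
  simp only [UC, U_add_two, eval_sub, eval_mul, eval_ofNat, eval_X]
  ring

lemma UC_zero' (x : ℂ) : UC 0 (x/2) = 1 := by simp [UC, U_zero]
lemma UC_one' (x : ℂ) : UC 1 (x/2) = x := by
  simp only [UC, U_one, eval_mul, eval_ofNat, eval_X]; ring

def pmat (k : ℕ) (x : ℂ) : Matrix (Fin k) (Fin k) ℂ :=
  Matrix.of fun i j =>
    (if i = j then x else 0) - (if (j:ℕ) = (i:ℕ)+1 ∨ (i:ℕ) = (j:ℕ)+1 then 1 else 0)

lemma pmat_eq (k : ℕ) (x : ℂ) :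
    pmat k x = x • (1 : Matrix (Fin k) (Fin k) ℂ) -
      Matrix.of (fun i j : Fin k => if (j:ℕ) = (i:ℕ)+1 ∨ (i:ℕ) = (j:ℕ)+1 then (1:ℂ) else 0) := by
  ext i j
  simp [pmat, Matrix.one_apply, mul_ite]


lemma det_pmat (x : ℂ) : ∀ k : ℕ, (pmat k x).det = UC k (x/2) := by
  intro k
  induction k using Nat.strong_induction_on with
  | _ k ih =>
    match k with
    | 0 => simp [Matrix.det_fin_zero, UC_zero' x]
    | 1 => simp [Matrix.det_fin_one, pmat, UC_one' x]
    | (n+2) =>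
      rw [Matrix.det_succ_row_zero, Fin.sum_univ_succ, Fin.sum_univ_succ, Fin.succ_zero_eq_one]
      have hz : ∀ j : Fin n, ((-1:ℂ))^(((j.succ.succ : Fin (n+2))):ℕ) *
          pmat (n+2) x 0 j.succ.succ *
          ((pmat (n+2) x).submatrix Fin.succ (Fin.succAbove j.succ.succ)).det = 0 := by
        intro j
        have hv : (((j.succ.succ : Fin (n+2))):ℕ) = (j:ℕ)+2 := by simp
        have : pmat (n+2) x 0 j.succ.succ = 0 := by
          simp only [pmat, Matrix.of_apply, hv, Fin.ext_iff, Fin.val_zero]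
          have h1 : ¬((0:ℕ) = (j:ℕ)+2) := by omega
          have h2 : ¬(((j:ℕ)+2 = 0+1) ∨ ((0:ℕ) = (j:ℕ)+2+1)) := by omega
          simp [h1, h2]
        rw [this]; ring
      rw [Finset.sum_eq_zero (fun j _ => hz j), add_zero]
      have h00 : pmat (n+2) x 0 0 = x := by simp [pmat]
      have h01 : pmat (n+2) x 0 1 = -1 := by
        have hv : (((1 : Fin (n+2))):ℕ) = 1 := rfl
        simp only [pmat, Matrix.of_apply, Fin.ext_iff, Fin.val_zero, hv]
        norm_num
      have hm0 : (pmat (n+2) x).submatrix Fin.succ (Fin.succAbove 0) = pmat (n+1) x := by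
        ext i j
        simp only [Fin.succAbove_zero, Matrix.submatrix_apply, pmat, Matrix.of_apply,
          Fin.val_succ, Fin.ext_iff]
        split_ifs <;> first | rfl | (exfalso; omega)
      -- second minor: expand along column 0
      have key : ((pmat (n+2) x).submatrix Fin.succ (Fin.succAbove 1)).det = -(pmat n x).det := by
        set N := (pmat (n+2) x).submatrix Fin.succ (Fin.succAbove 1) with hN
        have hsa0 : (Fin.succAbove (1 : Fin (n+2)) (0 : Fin (n+1))) = (0 : Fin (n+2)) := by
          simp [Fin.succAbove, Fin.ext_iff]
        have hsas : ∀ j : Fin n, (Fin.succAbove (1 : Fin (n+2)) (j.succ)) = j.succ.succ := by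
          intro j
          simp only [Fin.succAbove, Fin.ext_iff]
          split <;> rename_i hc
          · exfalso
            have := hc
            simp [Fin.lt_def] at this
          · simp
        have hcol : ∀ i : Fin (n+1), N i 0 = if (i:ℕ) = 0 then (-1:ℂ) else 0 := by
          intro i
          rw [hN, Matrix.submatrix_apply, hsa0]
          have h1 : ¬(i.succ = (0 : Fin (n+2))) := Fin.succ_ne_zero i
          have h2 : (((0:Fin (n+2)):ℕ) = ((i.succ : Fin (n+2)):ℕ)+1 ∨ ((i.succ : Fin (n+2)):ℕ) = ((0:Fin (n+2)):ℕ)+1) ↔ ((i:ℕ) = 0) := by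
            simp only [Fin.val_succ, Fin.val_zero]
            omega
          simp only [pmat, Matrix.of_apply, if_neg h1, h2]
          split <;> norm_num
        rw [Matrix.det_succ_column_zero, Fin.sum_univ_succ]
        have hz2 : ∀ i : Fin n, ((-1:ℂ))^(((i.succ : Fin (n+1))):ℕ) * N i.succ 0 *
            (N.submatrix (Fin.succAbove i.succ) Fin.succ).det = 0 := by
          intro i
          rw [hcol i.succ]
          simp [Fin.val_succ]
        rw [Finset.sum_eq_zero (fun i _ => hz2 i), add_zero, hcol 0]
        have hm : (N.submatrix (Fin.succAbove 0) Fin.succ) = pmat n x := by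
          ext i j
          rw [Matrix.submatrix_apply, Fin.succAbove_zero, hN, Matrix.submatrix_apply, hsas j]
          simp only [pmat, Matrix.of_apply, Fin.ext_iff, Fin.val_succ]
          split_ifs <;> first | rfl | (exfalso; omega)
        rw [hm]
        simp
      rw [hm0, key, h00, h01, ih (n+1) (by omega), ih n (by omega)]
      have hrec := UC_rec x n
      have hv1 : (((1 : Fin (n+2))):ℕ) = 1 := rfl
      simp only [Fin.val_zero, hv1, pow_zero, pow_one]
      push_cast
      push_cast at hrec
      rw [hrec]
      ring

lemma UC_negone' (x : ℂ) : UC (-1) (x/2) = 0 := by simp [UC, U_neg_one]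


lemma UC_prod (x : ℂ) (K : ℤ) : ∀ n : ℕ,
    UC n (x/2) * UC (K - n) (x/2) - UC ((n:ℤ)-1) (x/2) * UC (K - n - 1) (x/2) = UC K (x/2) := by
  intro n
  induction n with
  | zero => simp [UC_negone', UC_zero']
  | succ m ih =>
    have r1 := UC_rec x ((m:ℤ)-1)
    have r2 := UC_rec x (K - (m:ℤ) - 2)
    push_cast
    linear_combination (norm := (push_cast; ring_nf)) ih + UC (K-(m:ℤ)-1) (x/2) * r1 - UC m (x/2) * r2

lemma keylemma (k : ℕ) (x : ℂ) (hU : UC k (x/2) ≠ 0) (a b : ℕ) (ha : a < k) (hb : b < k) :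
    x * (UC (min (a:ℤ) (b:ℤ)) (x/2) * UC ((k:ℤ)-1 - max (a:ℤ) (b:ℤ)) (x/2) / UC k (x/2))
    - (if a+1 < k then UC (min ((a:ℤ)+1) (b:ℤ)) (x/2) * UC ((k:ℤ)-1 - max ((a:ℤ)+1) (b:ℤ)) (x/2) / UC k (x/2) else 0)
    - (UC (min ((a:ℤ)-1) (b:ℤ)) (x/2) * UC ((k:ℤ)-1 - max ((a:ℤ)-1) (b:ℤ)) (x/2) / UC k (x/2))
    = if a = b then 1 else 0 := by
  have hrec := UC_rec x
  have hz := UC_zero' x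
  have ho := UC_one' x
  have hneg := UC_negone' x
  rcases lt_trichotomy a b with hab | hab | hab
  · rw [if_pos (by omega), if_neg (by omega : ¬ a = b),
      min_eq_left (by omega : (a:ℤ) ≤ (b:ℤ)), max_eq_right (by omega : (a:ℤ) ≤ (b:ℤ)),
      min_eq_left (by omega : (a:ℤ)+1 ≤ (b:ℤ)), max_eq_right (by omega : (a:ℤ)+1 ≤ (b:ℤ)),
      min_eq_left (by omega : (a:ℤ)-1 ≤ (b:ℤ)), max_eq_right (by omega : (a:ℤ)-1 ≤ (b:ℤ))]
    field_simp
    linear_combination (norm := (push_cast; ring_nf)) (-UC ((k:ℤ)-1-(b:ℤ)) (x/2)) * hrec ((a:ℤ)-1)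
  · subst hab
    rw [if_pos rfl, min_self, max_self,
      min_eq_left (by omega : (a:ℤ)-1 ≤ (a:ℤ)), max_eq_right (by omega : (a:ℤ)-1 ≤ (a:ℤ))]
    by_cases hk : a+1 < k
    · rw [if_pos hk, min_eq_right (by omega : (a:ℤ) ≤ (a:ℤ)+1), max_eq_left (by omega : (a:ℤ) ≤ (a:ℤ)+1)]
      have hprod := UC_prod x k (a+1)
      field_simp
      linear_combination (norm := (push_cast; ring_nf)) hprod - UC ((k:ℤ)-1-(a:ℤ)) (x/2) * hrec ((a:ℤ)-1)
    · rw [if_neg hk]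
      have hak : ((a:ℕ):ℤ) = (k:ℤ)-1 := by omega
      rw [hak]
      field_simp
      linear_combination (norm := (push_cast; ring_nf)) (-1) * hrec ((k:ℤ)-2) + (x * UC ((k:ℤ)-1) (x/2) - UC ((k:ℤ)-2) (x/2)) * hz
  · by_cases hk : a+1 < k
    · rw [if_pos hk, if_neg (by omega : ¬ a = b),
        min_eq_right (by omega : (b:ℤ) ≤ (a:ℤ)), max_eq_left (by omega : (b:ℤ) ≤ (a:ℤ)),
        min_eq_right (by omega : (b:ℤ) ≤ (a:ℤ)+1), max_eq_left (by omega : (b:ℤ) ≤ (a:ℤ)+1),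
        min_eq_right (by omega : (b:ℤ) ≤ (a:ℤ)-1), max_eq_left (by omega : (b:ℤ) ≤ (a:ℤ)-1)]
      field_simp
      linear_combination (norm := (push_cast; ring_nf)) (-UC (b:ℤ) (x/2)) * hrec ((k:ℤ)-2-(a:ℤ))
    · rw [if_neg hk, if_neg (by omega : ¬ a = b),
        min_eq_right (by omega : (b:ℤ) ≤ (a:ℤ)), max_eq_left (by omega : (b:ℤ) ≤ (a:ℤ)),
        min_eq_right (by omega : (b:ℤ) ≤ (a:ℤ)-1), max_eq_left (by omega : (b:ℤ) ≤ (a:ℤ)-1)]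
      have hak : ((a:ℕ):ℤ) = (k:ℤ)-1 := by omega
      rw [hak]
      field_simp
      linear_combination (norm := (push_cast; ring_nf)) (x * UC (b:ℤ) (x/2)) * hz - UC (b:ℤ) (x/2) * ho

def nmat (k : ℕ) (x : ℂ) : Matrix (Fin k) (Fin k) ℂ :=
  Matrix.of fun i j =>
    UC (min ((i:ℕ):ℤ) ((j:ℕ):ℤ)) (x/2) * UC ((k:ℤ)-1 - max ((i:ℕ):ℤ) ((j:ℕ):ℤ)) (x/2) / UC k (x/2)

lemma pmat_mul_nmat (k : ℕ) (x : ℂ) (hU : UC (k:ℤ) (x/2) ≠ 0) :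
    pmat k x * nmat k x = 1 := by
  ext i j
  have hik : (i:ℕ) < k := i.isLt
  have hjk : (j:ℕ) < k := j.isLt
  have pick : ∀ (c : ℕ) (f : Fin k → ℂ),
      (∑ l : Fin k, if (l:ℕ) = c then f l else 0) = if hc : c < k then f ⟨c, hc⟩ else 0 := by
    intro c f
    split
    · rename_i hc
      rw [Finset.sum_eq_single_of_mem (⟨c, hc⟩ : Fin k) (Finset.mem_univ _)
        (fun l _ hne => if_neg (fun hcl => hne (Fin.ext hcl)))]
      exact if_pos rfl
    · rename_i hc
      exact Finset.sum_eq_zero (fun l _ => if_neg (fun hcl => hc (by rw [← hcl]; exact l.isLt)))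
  have por : ∀ l : Fin k, (if ((l:ℕ) = (i:ℕ)+1 ∨ (i:ℕ) = (l:ℕ)+1) then (1:ℂ) else 0)
      = (if (l:ℕ) = (i:ℕ)+1 then (1:ℂ) else 0) + (if (i:ℕ) = (l:ℕ)+1 then (1:ℂ) else 0) := by
    intro l
    by_cases h1 : (l:ℕ) = (i:ℕ)+1 <;> by_cases h2 : (i:ℕ) = (l:ℕ)+1
    · exfalso; omega
    · rw [if_pos (Or.inl h1), if_pos h1, if_neg h2]; norm_num
    · rw [if_pos (Or.inr h2), if_neg h1, if_pos h2]; norm_num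
    · rw [if_neg (fun hor => hor.elim h1 h2), if_neg h1, if_neg h2]; norm_num
  have expand : ∀ l : Fin k, pmat k x i l * nmat k x l j =
      (if i = l then x * nmat k x l j else 0)
      - ((if (l:ℕ) = (i:ℕ)+1 then nmat k x l j else 0)
        + (if (i:ℕ) = (l:ℕ)+1 then nmat k x l j else 0)) := by
    intro l
    show ((if i = l then x else 0) - if ((l:ℕ) = (i:ℕ)+1 ∨ (i:ℕ) = (l:ℕ)+1) then (1:ℂ) else 0)
        * nmat k x l j = _
    rw [por l, sub_mul, add_mul]
    simp only [ite_mul, zero_mul, one_mul]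
  rw [Matrix.mul_apply, Matrix.one_apply, Finset.sum_congr rfl (fun l _ => expand l),
    Finset.sum_sub_distrib, Finset.sum_add_distrib,
    Finset.sum_ite_eq Finset.univ i (fun l => x * nmat k x l j)]
  simp only [Finset.mem_univ, if_true]
  rw [pick ((i:ℕ)+1) (fun l => nmat k x l j)]
  have hS2cond : ∀ l : Fin k, ((i:ℕ) = (l:ℕ)+1) = ((l:ℕ) = (i:ℕ)-1 ∧ 1 ≤ (i:ℕ)) := by
    intro l; apply propext; omega
  simp only [hS2cond]
  have key := keylemma k x hU (i:ℕ) (j:ℕ) hik hjk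
  have hfin : (i = j) = ((i:ℕ) = (j:ℕ)) := propext Fin.ext_iff
  have e1 : nmat k x i j = UC (min ((i:ℕ):ℤ) ((j:ℕ):ℤ)) (x/2) *
      UC ((k:ℤ)-1 - max ((i:ℕ):ℤ) ((j:ℕ):ℤ)) (x/2) / UC k (x/2) := rfl
  by_cases hi0 : 1 ≤ (i:ℕ)
  · have hstep : ∀ l : Fin k, (if ((l:ℕ) = (i:ℕ)-1 ∧ 1 ≤ (i:ℕ)) then nmat k x l j else 0)
        = (if (l:ℕ) = (i:ℕ)-1 then nmat k x l j else 0) := by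
      intro l; by_cases hl : (l:ℕ) = (i:ℕ)-1 <;> simp [hl, hi0]
    rw [Finset.sum_congr rfl (fun l _ => hstep l), pick ((i:ℕ)-1) (fun l => nmat k x l j),
      dif_pos (by omega : (i:ℕ)-1 < k)]
    have hcast : ((((i:ℕ)-1 : ℕ)):ℤ) = ((i:ℕ):ℤ)-1 := by omega
    have e3 : nmat k x ⟨(i:ℕ)-1, by omega⟩ j = UC (min (((i:ℕ):ℤ)-1) ((j:ℕ):ℤ)) (x/2) *
        UC ((k:ℤ)-1 - max (((i:ℕ):ℤ)-1) ((j:ℕ):ℤ)) (x/2) / UC k (x/2) := by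
      show UC (min ((((i:ℕ)-1:ℕ)):ℤ) ((j:ℕ):ℤ)) (x/2) *
        UC ((k:ℤ)-1 - max ((((i:ℕ)-1:ℕ)):ℤ) ((j:ℕ):ℤ)) (x/2) / UC k (x/2) = _
      rw [hcast]
    rw [e3, e1]
    simp only [hfin]
    by_cases hik1 : (i:ℕ)+1 < k
    · rw [dif_pos hik1, if_pos hik1] at *
      have e2 : nmat k x ⟨(i:ℕ)+1, hik1⟩ j = UC (min (((i:ℕ):ℤ)+1) ((j:ℕ):ℤ)) (x/2) *
          UC ((k:ℤ)-1 - max (((i:ℕ):ℤ)+1) ((j:ℕ):ℤ)) (x/2) / UC k (x/2) := by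
        show UC (min ((((i:ℕ)+1:ℕ)):ℤ) ((j:ℕ):ℤ)) (x/2) *
          UC ((k:ℤ)-1 - max ((((i:ℕ)+1:ℕ)):ℤ) ((j:ℕ):ℤ)) (x/2) / UC k (x/2) = _
        norm_num
      rw [e2]
      linear_combination key
    · rw [dif_neg hik1, if_neg hik1] at *
      linear_combination key
  · have hz' : ∀ l : Fin k, (if ((l:ℕ) = (i:ℕ)-1 ∧ 1 ≤ (i:ℕ)) then nmat k x l j else 0) = 0 := by
      intro l; rw [if_neg]; omega
    rw [Finset.sum_eq_zero (fun l _ => hz' l), e1]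
    simp only [hfin]
    have hmin : min (((i:ℕ):ℤ)-1) ((j:ℕ):ℤ) = -1 := by omega
    have hneg := UC_negone' x
    rw [hmin, hneg, zero_mul, zero_div] at key
    by_cases hik1 : (i:ℕ)+1 < k
    · rw [dif_pos hik1, if_pos hik1] at *
      have e2 : nmat k x ⟨(i:ℕ)+1, hik1⟩ j = UC (min (((i:ℕ):ℤ)+1) ((j:ℕ):ℤ)) (x/2) *
          UC ((k:ℤ)-1 - max (((i:ℕ):ℤ)+1) ((j:ℕ):ℤ)) (x/2) / UC k (x/2) := by
        show UC (min ((((i:ℕ)+1:ℕ)):ℤ) ((j:ℕ):ℤ)) (x/2) *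
          UC ((k:ℤ)-1 - max ((((i:ℕ)+1:ℕ)):ℤ) ((j:ℕ):ℤ)) (x/2) / UC k (x/2) = _
        norm_num
      rw [e2]
      linear_combination key
    · rw [dif_neg hik1, if_neg hik1] at *
      linear_combination key



section Big
variable {V E : Type*} [Fintype V] [DecidableEq V] [Fintype E] [DecidableEq E]

def bigD (E : Type*) [Fintype E] (k : ℕ) (x : ℂ) : Matrix (E × Fin k) (E × Fin k) ℂ :=
  Matrix.of fun p q => if p.1 = q.1 then pmat k x p.2 q.2 else 0

def bigN (E : Type*) [Fintype E] (k : ℕ) (x : ℂ) : Matrix (E × Fin k) (E × Fin k) ℂ :=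
  Matrix.of fun p q => if p.1 = q.1 then nmat k x p.2 q.2 else 0

lemma bigD_mul_bigN (k : ℕ) (x : ℂ) (hU : UC (k:ℤ) (x/2) ≠ 0) :
    bigD E k x * bigN E k x = 1 := by
  have h := pmat_mul_nmat k x hU
  ext ⟨e, i⟩ ⟨f, j⟩
  rw [Matrix.mul_apply, Fintype.sum_prod_type]
  have step1 : ∀ g : E, (∑ l : Fin k, bigD E k x (e,i) (g,l) * bigN E k x (g,l) (f,j))
      = if e = g then (if e = f then (∑ l : Fin k, pmat k x i l * nmat k x l j) else 0) else 0 := by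
    intro g
    by_cases hg : e = g
    · subst hg
      by_cases hf : e = f
      · subst hf
        simp [bigD, bigN]
      · simp [bigD, bigN, hf]
    · simp [bigD, bigN, hg]
  rw [Finset.sum_congr rfl (fun g _ => step1 g),
    Finset.sum_ite_eq Finset.univ e
      (fun g => (if e = f then (∑ l : Fin k, pmat k x i l * nmat k x l j) else 0))]
  simp only [Finset.mem_univ, if_true]
  rw [show (∑ l : Fin k, pmat k x i l * nmat k x l j) = (pmat k x * nmat k x) i j from
    (Matrix.mul_apply).symm, h]
  by_cases hf : e = f
  · subst hf
    simp [Matrix.one_apply, Prod.ext_iff]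
  · simp [Matrix.one_apply, Prod.ext_iff, hf]

lemma det_bigD (k : ℕ) (x : ℂ) : (bigD E k x).det = (UC (k:ℤ) (x/2)) ^ (Fintype.card E) := by
  have hrw : bigD E k x = (Matrix.blockDiagonal (fun _ : E => pmat k x)).submatrix
      (Equiv.prodComm E (Fin k)) (Equiv.prodComm E (Fin k)) := by
    ext ⟨e, i⟩ ⟨f, j⟩
    simp only [bigD, Matrix.of_apply, Matrix.submatrix_apply, Equiv.prodComm_apply,
      Prod.swap_prod_mk, Matrix.blockDiagonal_apply]
  rw [hrw, Matrix.det_submatrix_equiv_self, Matrix.det_blockDiagonal]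
  simp [det_pmat x k]

end Big

section Big2
variable {V E : Type*} [Fintype V] [DecidableEq V] [Fintype E] [DecidableEq E]

def bvec (t h : E → V) (k : ℕ) (v : V) (p : E × Fin k) : ℂ :=
  (if t p.1 = v ∧ (p.2:ℕ) = 0 then 1 else 0) + (if h p.1 = v ∧ (p.2:ℕ) + 1 = k then 1 else 0)

lemma ind_mul (P : Prop) [Decidable P] (a : ℂ) : (if P then a else 0) = (if P then 1 else 0) * a := by
  split <;> simp

lemma ind_and (P Q : Prop) [Decidable P] [Decidable Q] :
    (if P then (1:ℂ) else 0) * (if Q then 1 else 0) = if P ∧ Q then 1 else 0 := by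
  by_cases hP : P <;> by_cases hQ : Q <;> simp [hP, hQ]

lemma counting_adj (t h : E → V) (hloopfree : ∀ e, t e ≠ h e) (u v : V) :
    adjGraph t h u v = ∑ f, ((if t f = u then (1:ℂ) else 0) * (if h f = v then 1 else 0)
      + (if h f = u then 1 else 0) * (if t f = v then 1 else 0)) := by
  unfold adjGraph
  rw [Matrix.of_apply, Finset.card_filter]
  push_cast
  refine Finset.sum_congr rfl (fun f _ => ?_)
  rw [ind_and, ind_and]
  by_cases h1 : t f = u ∧ h f = v <;> by_cases h2 : t f = v ∧ h f = u
  · exfalso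
    exact hloopfree f (by rw [h1.1, h2.2])
  · have hor : ((t f = u ∧ h f = v) ∨ (t f = v ∧ h f = u)) := Or.inl h1
    have h2' : ¬ (h f = u ∧ t f = v) := fun hc => h2 ⟨hc.2, hc.1⟩
    rw [if_pos hor, if_pos h1, if_neg h2']
    norm_num
  · have hor : ((t f = u ∧ h f = v) ∨ (t f = v ∧ h f = u)) := Or.inr h2
    have h2' : (h f = u ∧ t f = v) := ⟨h2.2, h2.1⟩
    rw [if_pos hor, if_neg h1, if_pos h2']
    norm_num
  · have hor : ¬((t f = u ∧ h f = v) ∨ (t f = v ∧ h f = u)) := fun hc => hc.elim h1 h2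
    have h2' : ¬ (h f = u ∧ t f = v) := fun hc => h2 ⟨hc.2, hc.1⟩
    rw [if_neg hor, if_neg h1, if_neg h2']
    norm_num

lemma counting_deg (t h : E → V) (hloopfree : ∀ e, t e ≠ h e) (u v : V) :
    degOf (adjGraph t h) u v = ∑ f, ((if t f = u then (1:ℂ) else 0) * (if t f = v then 1 else 0)
      + (if h f = u then 1 else 0) * (if h f = v then 1 else 0)) := by
  rw [degOf, Matrix.diagonal_apply]
  by_cases huv : u = v
  · subst huv
    rw [if_pos rfl]
    have : ∀ w, adjGraph t h u w = ∑ f, ((if t f = u then (1:ℂ) else 0) * (if h f = w then 1 else 0)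
        + (if h f = u then 1 else 0) * (if t f = w then 1 else 0)) := counting_adj t h hloopfree u
    rw [Finset.sum_congr rfl (fun w _ => this w), Finset.sum_comm]
    refine Finset.sum_congr rfl (fun f _ => ?_)
    rw [Finset.sum_add_distrib]
    have e1 : (∑ w, (if t f = u then (1:ℂ) else 0) * (if h f = w then 1 else 0))
        = (if t f = u then (1:ℂ) else 0) := by
      rw [← Finset.mul_sum]
      rw [Finset.sum_ite_eq Finset.univ (h f) (fun _ => (1:ℂ))]
      simp
    have e2 : (∑ w, (if h f = u then (1:ℂ) else 0) * (if t f = w then 1 else 0))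
        = (if h f = u then (1:ℂ) else 0) := by
      rw [← Finset.mul_sum]
      rw [Finset.sum_ite_eq Finset.univ (t f) (fun _ => (1:ℂ))]
      simp
    rw [e1, e2, ind_and, ind_and]
    by_cases h1 : t f = u <;> by_cases h2 : h f = u <;> simp [h1, h2]
  · rw [if_neg huv]
    symm
    refine Finset.sum_eq_zero (fun f _ => ?_)
    rw [ind_and, ind_and, if_neg (fun hc : t f = u ∧ t f = v => huv (by rw [← hc.1, hc.2])),
      if_neg (fun hc : h f = u ∧ h f = v => huv (by rw [← hc.1, hc.2]))]
    norm_num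

end Big2

section Big3
variable {V E : Type*} [Fintype V] [DecidableEq V] [Fintype E] [DecidableEq E]

lemma pickFin (k : ℕ) (c : ℕ) (hc : c < k) (f : Fin k → ℂ) :
    (∑ l : Fin k, if (l:ℕ) = c then f l else 0) = f ⟨c, hc⟩ := by
  rw [Finset.sum_eq_single_of_mem (⟨c, hc⟩ : Fin k) (Finset.mem_univ _)
    (fun l _ hne => if_neg (fun hcl => hne (Fin.ext hcl)))]
  exact if_pos rfl

lemma ind_swap (P C : Prop) [Decidable P] [Decidable C] (a : ℂ) :
    (if P ∧ C then (1:ℂ) else 0) * a = if C then ((if P then (1:ℂ) else 0) * a) else 0 := by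
  by_cases hP : P <;> by_cases hC : C <;> simp [hP, hC]

def bmatU (t h : E → V) (k : ℕ) : Matrix V (E × Fin k) ℂ :=
  Matrix.of fun w p => -(bvec t h k w p)

def bmatL (t h : E → V) (k : ℕ) : Matrix (E × Fin k) V ℂ :=
  Matrix.of fun p w => -(bvec t h k w p)

lemma hrow (t h : E → V) (k : ℕ) (hk : k ≠ 0) (w : V) (f : E) (g : Fin k → ℂ) :
    (∑ i : Fin k, bvec t h k w (f, i) * g i)
    = (if t f = w then (1:ℂ) else 0) * g ⟨0, Nat.pos_of_ne_zero hk⟩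
      + (if h f = w then (1:ℂ) else 0) * g ⟨k-1, by omega⟩ := by
  have expand : ∀ i : Fin k, bvec t h k w (f, i) * g i
      = (if (i:ℕ) = 0 then ((if t f = w then (1:ℂ) else 0) * g i) else 0)
        + (if (i:ℕ) = k-1 then ((if h f = w then (1:ℂ) else 0) * g i) else 0) := by
    intro i
    have c2 : ((i:ℕ)+1 = k) = ((i:ℕ) = k-1) := propext (by have := i.isLt; omega)
    show ((if t f = w ∧ (i:ℕ) = 0 then (1:ℂ) else 0)
      + (if h f = w ∧ (i:ℕ)+1 = k then 1 else 0)) * g i = _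
    rw [add_mul]
    simp only [c2]
    rw [ind_swap, ind_swap]
  rw [Finset.sum_congr rfl (fun i _ => expand i), Finset.sum_add_distrib,
    pickFin k 0 (Nat.pos_of_ne_zero hk) (fun i => (if t f = w then (1:ℂ) else 0) * g i),
    pickFin k (k-1) (by omega) (fun i => (if h f = w then (1:ℂ) else 0) * g i)]

lemma BNC (t h : E → V) (hloopfree : ∀ e, t e ≠ h e) (k : ℕ) (hk : k ≠ 0) (x : ℂ)
    (hU : UC (k:ℤ) (x/2) ≠ 0) (u v : V) :
    (bmatU t h k * bigN E k x * bmatL t h k) u v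
    = (UC ((k:ℤ)-1) (x/2) / UC k (x/2)) * degOf (adjGraph t h) u v
      + (1 / UC k (x/2)) * adjGraph t h u v := by
  have hkpos : 0 < k := Nat.pos_of_ne_zero hk
  have hcast : (((k-1:ℕ)):ℤ) = (k:ℤ)-1 := by omega
  set i0 : Fin k := ⟨0, hkpos⟩ with hi0
  set iL : Fin k := ⟨k-1, by omega⟩ with hiL
  have v00 : nmat k x i0 i0 = UC ((k:ℤ)-1) (x/2) / UC k (x/2) := by
    show UC (min ((0:ℕ):ℤ) ((0:ℕ):ℤ)) (x/2) * UC ((k:ℤ)-1 - max ((0:ℕ):ℤ) ((0:ℕ):ℤ)) (x/2)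
      / UC k (x/2) = _
    rw [min_self, max_self]
    norm_num [UC_zero' x]
  have v0L : nmat k x i0 iL = 1 / UC k (x/2) := by
    show UC (min ((0:ℕ):ℤ) (((k-1:ℕ)):ℤ)) (x/2) * UC ((k:ℤ)-1 - max ((0:ℕ):ℤ) (((k-1:ℕ)):ℤ)) (x/2)
      / UC k (x/2) = _
    rw [hcast, min_eq_left (by omega), max_eq_right (by omega)]
    norm_num [UC_zero' x]
  have vL0 : nmat k x iL i0 = 1 / UC k (x/2) := by
    show UC (min (((k-1:ℕ)):ℤ) ((0:ℕ):ℤ)) (x/2) * UC ((k:ℤ)-1 - max (((k-1:ℕ)):ℤ) ((0:ℕ):ℤ)) (x/2)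
      / UC k (x/2) = _
    rw [hcast, min_eq_right (by omega), max_eq_left (by omega)]
    norm_num [UC_zero' x]
  have vLL : nmat k x iL iL = UC ((k:ℤ)-1) (x/2) / UC k (x/2) := by
    show UC (min (((k-1:ℕ)):ℤ) (((k-1:ℕ)):ℤ)) (x/2)
      * UC ((k:ℤ)-1 - max (((k-1:ℕ)):ℤ) (((k-1:ℕ)):ℤ)) (x/2) / UC k (x/2) = _
    rw [min_self, max_self, hcast]
    rw [show (k:ℤ)-1-((k:ℤ)-1) = 0 from by ring, UC_zero' x, mul_one]
  have hBN : ∀ (f : E) (j : Fin k), (bmatU t h k * bigN E k x) u (f, j)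
      = -((if t f = u then (1:ℂ) else 0) * nmat k x i0 j
          + (if h f = u then (1:ℂ) else 0) * nmat k x iL j) := by
    intro f j
    rw [Matrix.mul_apply, Fintype.sum_prod_type]
    have step : ∀ e : E, (∑ i : Fin k, bmatU t h k u (e,i) * bigN E k x (e,i) (f,j))
        = if e = f then -(∑ i : Fin k, bvec t h k u (e,i) * nmat k x i j) else 0 := by
      intro e
      by_cases he : e = f
      · subst he
        rw [if_pos rfl, ← Finset.sum_neg_distrib]
        refine Finset.sum_congr rfl (fun i _ => ?_)
        simp only [bmatU, bigN, Matrix.of_apply, if_true]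
        ring
      · rw [if_neg he]
        refine Finset.sum_eq_zero (fun i _ => ?_)
        simp only [bmatU, bigN, Matrix.of_apply]
        rw [if_neg he, mul_zero]
    rw [Finset.sum_congr rfl (fun e _ => step e),
      Finset.sum_ite_eq' Finset.univ f (fun e => -(∑ i : Fin k, bvec t h k u (e,i) * nmat k x i j))]
    simp only [Finset.mem_univ, if_true]
    rw [hrow t h k hk u f (fun i => nmat k x i j)]
  rw [Matrix.mul_apply, Fintype.sum_prod_type]
  have step2 : ∀ f : E, (∑ j : Fin k, (bmatU t h k * bigN E k x) u (f,j) * bmatL t h k (f,j) v)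
      = (if t f = v then (1:ℂ) else 0) *
          ((if t f = u then (1:ℂ) else 0) * nmat k x i0 i0
            + (if h f = u then (1:ℂ) else 0) * nmat k x iL i0)
        + (if h f = v then (1:ℂ) else 0) *
          ((if t f = u then (1:ℂ) else 0) * nmat k x i0 iL
            + (if h f = u then (1:ℂ) else 0) * nmat k x iL iL) := by
    intro f
    have per : ∀ j : Fin k, (bmatU t h k * bigN E k x) u (f,j) * bmatL t h k (f,j) v
        = bvec t h k v (f,j) * ((if t f = u then (1:ℂ) else 0) * nmat k x i0 j
          + (if h f = u then (1:ℂ) else 0) * nmat k x iL j) := by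
      intro j
      rw [hBN f j]
      show _ * (-(bvec t h k v (f,j))) = _
      ring
    rw [Finset.sum_congr rfl (fun j _ => per j),
      hrow t h k hk v f (fun j => (if t f = u then (1:ℂ) else 0) * nmat k x i0 j
        + (if h f = u then (1:ℂ) else 0) * nmat k x iL j)]
  rw [Finset.sum_congr rfl (fun f _ => step2 f)]
  rw [counting_deg t h hloopfree u v, counting_adj t h hloopfree u v,
    Finset.mul_sum, Finset.mul_sum, ← Finset.sum_add_distrib]
  refine Finset.sum_congr rfl (fun f _ => ?_)
  rw [v00, v0L, vL0, vLL]
  ring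
end Big3

section Main
variable {V E : Type*} [Fintype V] [DecidableEq V] [Fintype E] [DecidableEq E]

lemma generic (t h : E → V) (hloopfree : ∀ e, t e ≠ h e) (k : ℕ) (x : ℂ)
    (hU : UC (k:ℤ) (x/2) ≠ 0) :
    UC k (x / 2) ^ Fintype.card V *
        (x • (1 : Matrix (V ⊕ E × Fin k) (V ⊕ E × Fin k) ℂ) - subdivGraphAdj t h k).det =
      UC k (x / 2) ^ Fintype.card E *
        ((x * UC k (x / 2)) • (1 : Matrix V V ℂ)
          - UC ((k : ℤ) - 1) (x / 2) • degOf (adjGraph t h)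
          - adjGraph t h).det := by
  rcases Nat.eq_zero_or_pos k with hk0 | hkpos
  · subst hk0
    have h0 : UC ((0:ℕ):ℤ) (x/2) = 1 := by simpa using UC_zero' x
    have hneg : UC (((0:ℕ):ℤ)-1) (x/2) = 0 := by simpa using UC_negone' x
    rw [h0, hneg]
    have hdet : (x • (1 : Matrix (V ⊕ E × Fin 0) (V ⊕ E × Fin 0) ℂ) - subdivGraphAdj t h 0).det
        = ((x • (1 : Matrix V V ℂ)) - adjGraph t h).det := by
      rw [← Matrix.det_submatrix_equiv_self (Equiv.sumEmpty V (E × Fin 0)).symm]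
      congr 1
      ext u v
      simp only [Matrix.submatrix_apply, Matrix.sub_apply, Matrix.smul_apply, Matrix.one_apply,
        smul_eq_mul, Equiv.sumEmpty_symm_apply]
      simp [subdivGraphAdj, Sum.inl.injEq]
    rw [hdet]
    simp
  · have hk : k ≠ 0 := by omega
    have hM : (x • (1 : Matrix (V ⊕ E × Fin k) (V ⊕ E × Fin k) ℂ) - subdivGraphAdj t h k)
        = Matrix.fromBlocks (x • (1 : Matrix V V ℂ)) (bmatU t h k) (bmatL t h k) (bigD E k x) := by
      ext i j
      rcases i with u | ⟨e, i⟩ <;> rcases j with v | ⟨f, j⟩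
      · simp only [Matrix.sub_apply, Matrix.smul_apply, Matrix.one_apply, smul_eq_mul,
          Matrix.fromBlocks_apply₁₁, subdivGraphAdj, Matrix.of_apply, if_neg hk]
        simp [Sum.inl.injEq]
      · simp only [Matrix.sub_apply, Matrix.smul_apply, Matrix.one_apply, smul_eq_mul,
          Matrix.fromBlocks_apply₁₂, subdivGraphAdj, Matrix.of_apply, bmatU, bvec]
        rw [if_neg (by simp : ¬((Sum.inl u : V ⊕ E × Fin k) = Sum.inr (f, j))), mul_zero, zero_sub]
        congr!
      · simp only [Matrix.sub_apply, Matrix.smul_apply, Matrix.one_apply, smul_eq_mul,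
          Matrix.fromBlocks_apply₂₁, subdivGraphAdj, Matrix.of_apply, bmatL, bvec]
        rw [if_neg (by simp : ¬((Sum.inr (e, i) : V ⊕ E × Fin k) = Sum.inl v)), mul_zero, zero_sub]
        congr!
      · simp only [Matrix.sub_apply, Matrix.smul_apply, Matrix.one_apply, smul_eq_mul,
          Matrix.fromBlocks_apply₂₂, subdivGraphAdj, Matrix.of_apply, bigD]
        by_cases hef : e = f
        · subst hef
          simp only [if_pos rfl, pmat, Matrix.of_apply, Sum.inr.injEq, Prod.mk.injEq,
            true_and, Matrix.of_apply]
          by_cases hij : i = j <;> simp [hij]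
        · simp [hef, Prod.ext_iff]
    haveI : Invertible (bigD E k x) := invertibleOfRightInverse _ _ (bigD_mul_bigN k x hU)
    rw [hM, Matrix.det_fromBlocks₂₂, Matrix.invOf_eq_nonsing_inv,
      Matrix.inv_eq_right_inv (bigD_mul_bigN k x hU), det_bigD]
    have hSchur : (x • (1 : Matrix V V ℂ) - bmatU t h k * bigN E k x * bmatL t h k)
        = x • (1 : Matrix V V ℂ) - ((UC ((k:ℤ)-1) (x/2) / UC k (x/2)) • degOf (adjGraph t h)
            + (1 / UC k (x/2)) • adjGraph t h) := by
      ext u v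
      simp only [Matrix.sub_apply, Matrix.add_apply, Matrix.smul_apply, smul_eq_mul]
      rw [BNC t h hloopfree k hk x hU u v]
    rw [hSchur]
    have hR : ((x * UC k (x/2)) • (1 : Matrix V V ℂ) - UC ((k:ℤ)-1) (x/2) • degOf (adjGraph t h)
          - adjGraph t h)
        = UC k (x/2) • (x • (1 : Matrix V V ℂ)
            - ((UC ((k:ℤ)-1) (x/2) / UC k (x/2)) • degOf (adjGraph t h)
              + (1 / UC k (x/2)) • adjGraph t h)) := by
      ext u v
      simp only [Matrix.sub_apply, Matrix.add_apply, Matrix.smul_apply, smul_eq_mul]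
      field_simp
      ring
    rw [hR, Matrix.det_smul]
    ring

end Main

lemma U_eval_one : ∀ n : ℕ, (Polynomial.Chebyshev.U ℂ (n:ℤ)).eval 1 = n+1 := by
  intro n
  induction n using Nat.strong_induction_on with
  | _ n ih =>
    match n with
    | 0 => simp [U_zero]
    | 1 => norm_num [U_one]
    | (m+2) =>
      have hc : ((m+2:ℕ):ℤ) = ((m:ℕ):ℤ) + 2 := by push_cast; ring
      have i1 := ih (m+1) (by omega)
      have i0 := ih m (by omega)
      push_cast at i1 i0 ⊢
      rw [U_add_two, eval_sub, eval_mul, eval_mul, eval_X, eval_ofNat, i1, i0]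
      ring
theorem stmt_8' {V E : Type*} [Fintype V] [DecidableEq V] [Fintype E] [DecidableEq E]
    (t h : E → V) (hloopfree : ∀ e, t e ≠ h e) (k : ℕ) (x : ℂ) :
    UC k (x / 2) ^ Fintype.card V *
        (x • (1 : Matrix (V ⊕ E × Fin k) (V ⊕ E × Fin k) ℂ) - subdivGraphAdj t h k).det =
      UC k (x / 2) ^ Fintype.card E *
        ((x * UC k (x / 2)) • (1 : Matrix V V ℂ)
          - UC ((k : ℤ) - 1) (x / 2) • degOf (adjGraph t h)
          - adjGraph t h).det := by
  set pU : Polynomial ℂ := (Polynomial.Chebyshev.U ℂ (k:ℤ)).comp (Polynomial.C (2⁻¹:ℂ) * Polynomial.X) with hpU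
  set pU' : Polynomial ℂ := (Polynomial.Chebyshev.U ℂ ((k:ℤ)-1)).comp (Polynomial.C (2⁻¹:ℂ) * Polynomial.X) with hpU'
  have heval : ∀ y : ℂ, pU.eval y = UC k (y/2) := by
    intro y
    rw [hpU, Polynomial.eval_comp, Polynomial.eval_mul, Polynomial.eval_C, Polynomial.eval_X]
    rw [UC, show (2⁻¹ * y) = y/2 from by ring]
  have heval' : ∀ y : ℂ, pU'.eval y = UC ((k:ℤ)-1) (y/2) := by
    intro y
    rw [hpU', Polynomial.eval_comp, Polynomial.eval_mul, Polynomial.eval_C, Polynomial.eval_X]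
    rw [UC, show (2⁻¹ * y) = y/2 from by ring]
  have hne : pU ≠ 0 := by
    intro hc
    have h2 := heval 2
    rw [hc] at h2
    have : UC k ((2:ℂ)/2) = (k:ℂ)+1 := by
      rw [show ((2:ℂ)/2) = 1 from by norm_num, UC, U_eval_one k]
    rw [this] at h2
    simp only [Polynomial.eval_zero] at h2
    have hnz : ((k:ℂ)+1) ≠ 0 := by
      have h' : (((k+1:ℕ)):ℂ) ≠ 0 := Nat.cast_ne_zero.mpr (Nat.succ_ne_zero k)
      push_cast at h'
      exact h'
    exact hnz h2.symm
  have hfin : {y : ℂ | pU.eval y = 0}.Finite := Polynomial.finite_setOf_isRoot hne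
  have hinf : {y : ℂ | pU.eval y ≠ 0}.Infinite := by
    have := hfin.infinite_compl
    rwa [Set.compl_setOf] at this
  set M₁ : Matrix (V ⊕ E × Fin k) (V ⊕ E × Fin k) (Polynomial ℂ) :=
    (Polynomial.X : Polynomial ℂ) • 1 - (subdivGraphAdj t h k).map Polynomial.C with hM₁
  set M₂ : Matrix V V (Polynomial ℂ) :=
    ((Polynomial.X : Polynomial ℂ) * pU) • 1 - pU' • (degOf (adjGraph t h)).map Polynomial.C
      - (adjGraph t h).map Polynomial.C with hM₂
  set P₁ : Polynomial ℂ := pU ^ Fintype.card V * M₁.det with hP₁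
  set P₂ : Polynomial ℂ := pU ^ Fintype.card E * M₂.det with hP₂
  have hev₁ : ∀ y : ℂ, P₁.eval y = UC k (y / 2) ^ Fintype.card V *
      (y • (1 : Matrix (V ⊕ E × Fin k) (V ⊕ E × Fin k) ℂ) - subdivGraphAdj t h k).det := by
    intro y
    rw [hP₁, Polynomial.eval_mul, Polynomial.eval_pow, heval]
    congr 1
    have := RingHom.map_det (Polynomial.evalRingHom y) M₁
    rw [show Polynomial.eval y M₁.det = (Polynomial.evalRingHom y) M₁.det from rfl, this]
    congr 1
    ext i j
    simp only [hM₁, RingHom.mapMatrix_apply, Matrix.map_apply, Matrix.sub_apply, Matrix.smul_apply, Matrix.one_apply,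
      smul_eq_mul, Polynomial.coe_evalRingHom, Polynomial.eval_sub, Polynomial.eval_mul,
      Polynomial.eval_X, Polynomial.eval_C, apply_ite (Polynomial.eval y),
      Polynomial.eval_one, Polynomial.eval_zero]
  have hev₂ : ∀ y : ℂ, P₂.eval y = UC k (y / 2) ^ Fintype.card E *
      ((y * UC k (y / 2)) • (1 : Matrix V V ℂ)
        - UC ((k : ℤ) - 1) (y / 2) • degOf (adjGraph t h) - adjGraph t h).det := by
    intro y
    rw [hP₂, Polynomial.eval_mul, Polynomial.eval_pow, heval]
    congr 1
    have := RingHom.map_det (Polynomial.evalRingHom y) M₂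
    rw [show Polynomial.eval y M₂.det = (Polynomial.evalRingHom y) M₂.det from rfl, this]
    congr 1
    ext i j
    simp only [hM₂, RingHom.mapMatrix_apply, Matrix.map_apply, Matrix.sub_apply, Matrix.smul_apply, Matrix.one_apply,
      smul_eq_mul, Polynomial.coe_evalRingHom, Polynomial.eval_sub, Polynomial.eval_mul,
      Polynomial.eval_X, Polynomial.eval_C, apply_ite (Polynomial.eval y),
      Polynomial.eval_one, Polynomial.eval_zero, heval, heval']
  have hPP : P₁ = P₂ := by
    apply Polynomial.eq_of_infinite_eval_eq
    apply Set.Infinite.mono _ hinf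
    intro y hy
    simp only [Set.mem_setOf_eq] at hy ⊢
    rw [hev₁ y, hev₂ y]
    exact generic t h hloopfree k y (by rw [← heval y]; exact hy)
  calc UC k (x / 2) ^ Fintype.card V *
        (x • (1 : Matrix (V ⊕ E × Fin k) (V ⊕ E × Fin k) ℂ) - subdivGraphAdj t h k).det
      = P₁.eval x := (hev₁ x).symm
    _ = P₂.eval x := by rw [hPP]
    _ = _ := hev₂ x

/-- The characteristic polynomial of the `k`-th subdivision graph of a
loop-free multigraph `G`. -/
theorem stmt_8 {V E : Type*} [Fintype V] [DecidableEq V] [Fintype E] [DecidableEq E]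
    (t h : E → V) (hloopfree : ∀ e, t e ≠ h e) (k : ℕ) (x : ℂ) :
    UC k (x / 2) ^ Fintype.card V *
        (x • (1 : Matrix (V ⊕ E × Fin k) (V ⊕ E × Fin k) ℂ) - subdivGraphAdj t h k).det =
      UC k (x / 2) ^ Fintype.card E *
        ((x * UC k (x / 2)) • (1 : Matrix V V ℂ)
          - UC ((k : ℤ) - 1) (x / 2) • degOf (adjGraph t h)
          - adjGraph t h).det := by
  exact stmt_8' t h hloopfree k x
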